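/- arXiv:1505.04764 — 3 statements merged into one kernel-verified Lean document; each statement's English description precedes it below -/
import Mathlib

section
/- Let γ ∈ ℝ, b > 0, and 1 ≤ α < β. Set r = 1/(β−α) and λ̄ = b · min(α^γ, β^γ) / ((2e−1)(β−α)), and define u(x) = 2 − exp(−r(β−x)) for x ∈ [α, β]. Then u(β) = 1, 1 ≤ u(x) ≤ 2 on [α, β], u'(α) < 0, and for every λ with 0 ≤ λ ≤ λ̄ one has (1/2)u''(x) + b x^γ u'(x) + λ u(x) ≤ 0 for all x ∈ [α, β]. -/
open Real Set

/-!
Write `E = exp (-r (β - x))`. Since `r (β - x) ∈ [0, 1]` on `[α, β]`, `E ∈ [e⁻¹, 1]`, so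
`1 ≤ u = 2 - E ≤ 2`, `u' = -r E < 0` and `u'' = -r² E ≤ 0`. The drift term `b x^γ u' = -b x^γ r E`
is at most `-b min(α^γ, β^γ) r e⁻¹`, while `λ u ≤ λ̄ (2 - e⁻¹)`; these cancel exactly because
`2 - e⁻¹ = (2e - 1) e⁻¹`, which is where the constant `λ̄` comes from.
-/

section ExpProfile

variable (r β : ℝ)

theorem hasDerivAt_exp_neg_mul_sub (x : ℝ) :
    HasDerivAt (fun x => exp (-r * (β - x))) (r * exp (-r * (β - x))) x := by
  have h : HasDerivAt (fun x => -r * (β - x)) r x := by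
    simpa using ((hasDerivAt_id x).const_sub β).const_mul (-r)
  simpa [mul_comm] using h.exp

theorem deriv_const_sub_exp_neg_mul_sub (c : ℝ) :
    deriv (fun x => c - exp (-r * (β - x))) = fun x => -r * exp (-r * (β - x)) := by
  funext x
  simpa using ((hasDerivAt_exp_neg_mul_sub r β x).const_sub c).deriv

theorem deriv_deriv_const_sub_exp_neg_mul_sub (c x : ℝ) :
    deriv (deriv fun x => c - exp (-r * (β - x))) x = -r ^ 2 * exp (-r * (β - x)) := by
  rw [deriv_const_sub_exp_neg_mul_sub]
  simpa [pow_two, mul_assoc] using ((hasDerivAt_exp_neg_mul_sub r β x).const_mul (-r)).deriv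

end ExpProfile

theorem exp_neg_mul_sub_le_one {r β x : ℝ} (hr : 0 ≤ r) (hx : x ≤ β) :
    exp (-r * (β - x)) ≤ 1 :=
  exp_le_one_iff.mpr (by nlinarith)

theorem exp_neg_mul_sub_le_exp_neg_mul_sub {r α β x : ℝ} (hr : 0 ≤ r) (hx : α ≤ x) :
    exp (-r * (β - α)) ≤ exp (-r * (β - x)) :=
  exp_le_exp.mpr (by nlinarith)

theorem min_rpow_le_rpow_of_mem_Icc {α β x : ℝ} (γ : ℝ) (hα : 0 < α) (hx : x ∈ Icc α β) :
    min (α ^ γ) (β ^ γ) ≤ x ^ γ := by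
  rcases le_total 0 γ with hγ | hγ
  · exact (min_le_left _ _).trans (rpow_le_rpow hα.le hx.1 hγ)
  · exact (min_le_right _ _).trans (rpow_le_rpow_of_nonpos (hα.trans_le hx.1) hx.2 hγ)

theorem two_sub_exp_neg_one_eq : 2 - exp (-1) = (2 * exp 1 - 1) * exp (-1) := by
  rw [sub_mul, mul_assoc, ← exp_add]
  norm_num

theorem generator_two_sub_exp_nonpos {γ b α β r lam x : ℝ} (hb : 0 ≤ b) (hα : 0 < α)
    (hαβ : α < β) (hr : r = 1 / (β - α)) (hlam₀ : 0 ≤ lam)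
    (hlam : lam ≤ b * min (α ^ γ) (β ^ γ) / ((2 * exp 1 - 1) * (β - α)))
    (hx : x ∈ Icc α β) :
    1 / 2 * (-r ^ 2 * exp (-r * (β - x))) + b * x ^ γ * (-r * exp (-r * (β - x)))
      + lam * (2 - exp (-r * (β - x))) ≤ 0 := by
  set E := exp (-r * (β - x))
  set m := min (α ^ γ) (β ^ γ)
  have hβα : 0 < β - α := sub_pos.mpr hαβ
  have hr₀ : 0 ≤ r := by rw [hr]; positivity
  have hE₁ : E ≤ 1 := exp_neg_mul_sub_le_one hr₀ hx.2
  have hE₀ : exp (-1) ≤ E := by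
    have hrβα : -r * (β - α) = -1 := by rw [hr]; field_simp
    simpa only [hrβα] using exp_neg_mul_sub_le_exp_neg_mul_sub (β := β) hr₀ hx.1
  have he : 1 < exp 1 := one_lt_exp_iff.mpr one_pos
  have hlam_le : lam * (2 - E) ≤ b * x ^ γ * r * E :=
    calc lam * (2 - E)
        ≤ b * m / ((2 * exp 1 - 1) * (β - α)) * (2 - exp (-1)) :=
          mul_le_mul hlam (by linarith) (by linarith) (hlam₀.trans hlam)
      _ = b * m * r * exp (-1) := by
          rw [two_sub_exp_neg_one_eq, hr]
          field_simp [(by linarith : 2 * exp 1 - 1 ≠ 0)]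
      _ ≤ b * x ^ γ * r * E := by
          have hx₀ : 0 < x := hα.trans_le hx.1
          gcongr b * ?_ * r * ?_
          exact min_rpow_le_rpow_of_mem_Icc γ hα hx
  nlinarith [mul_nonneg (sq_nonneg r) (exp_pos (-r * (β - x))).le]

/-- For `γ ∈ ℝ`, `b > 0`, `1 ≤ α < β`, with `r = 1/(β-α)` and
`λ̄ = b·min(α^γ, β^γ)/((2e-1)(β-α))`, the function `u(x) = 2 - exp(-r(β-x))`
satisfies `u(β) = 1`, `1 ≤ u ≤ 2` on `[α,β]`, `u'(α) < 0`, and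
`(1/2)u'' + b x^γ u' + λ u ≤ 0` on `[α,β]` for every `0 ≤ λ ≤ λ̄`. -/
theorem stmt_4 (γ b α β : ℝ) (hb : 0 < b) (hα : 1 ≤ α) (hαβ : α < β)
    (r lambar : ℝ) (hr : r = 1 / (β - α))
    (hlambar : lambar = b * min (α ^ γ) (β ^ γ) / ((2 * Real.exp 1 - 1) * (β - α)))
    (u : ℝ → ℝ) (hu : u = fun x => 2 - Real.exp (-r * (β - x))) :
    u β = 1 ∧
    (∀ x ∈ Icc α β, 1 ≤ u x ∧ u x ≤ 2) ∧
    deriv u α < 0 ∧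
    (∀ lam : ℝ, 0 ≤ lam → lam ≤ lambar →
      ∀ x ∈ Icc α β,
        1 / 2 * deriv (deriv u) x + b * x ^ γ * deriv u x + lam * u x ≤ 0) := by
  have hr₀ : 0 < r := by rw [hr]; exact one_div_pos.mpr (sub_pos.mpr hαβ)
  subst hu hlambar
  refine ⟨by norm_num, fun x hx => ?_, ?_, fun lam hlam₀ hlam x hx => ?_⟩
  · have hE₁ := exp_neg_mul_sub_le_one hr₀.le hx.2
    have hE₀ := exp_pos (-r * (β - x))
    constructor <;> linarith
  · rw [deriv_const_sub_exp_neg_mul_sub]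
    exact mul_neg_of_neg_of_pos (neg_neg_of_pos hr₀) (exp_pos _)
  · rw [deriv_deriv_const_sub_exp_neg_mul_sub, deriv_const_sub_exp_neg_mul_sub]
    exact generator_two_sub_exp_nonpos hb.le (by linarith) hαβ hr hlam₀ hlam hx
end

section
/- Let γ > −1 and b, c > 0, set κ = 2bc^{1+γ}/(1+γ) and f_j = c·j^{1/(1+γ)} for positive integers j. Then there exist K₂ > 0 and J ∈ ℕ such that for all j ≥ J, (φ(f_j) − φ(f_{j+1}))/(φ(1) − φ(f_{j+1})) ≥ K₂ · j^{−γ/(1+γ)} · e^{−κ j}. -/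
/-!
Write `g t = exp (-a t^q)` with `a = 2b/(1+γ)` and `q = 1+γ`, so that `φ` is the tail integral
of `g`. Since `g` is decreasing, `φ(x) - φ(y) ≥ (y - x) g(y)`; for `x = f_j`, `y = f_{j+1}` one has
`g(f_{j+1}) = e^{-κ} e^{-κ j}`, while the mean value theorem gives
`f_{j+1} - f_j ≳ j^{1/(1+γ) - 1} = j^{-γ/(1+γ)}`. The denominator is positive and at most `φ(1)`.
-/

open Real Set MeasureTheory Filter

noncomputable def expRpowTail (a q x : ℝ) : ℝ := ∫ t in Ioi x, exp (-a * t ^ q)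

section ExpRpowTail

variable {a q x y : ℝ}

lemma integrableOn_exp_neg_mul_rpow_Ioi (ha : 0 < a) (hq : 0 < q) :
    IntegrableOn (fun t : ℝ => exp (-a * t ^ q)) (Ioi 0) := by
  simpa using integrableOn_rpow_mul_exp_neg_mul_rpow (s := 0) neg_one_lt_zero hq ha

lemma antitoneOn_exp_neg_mul_rpow (ha : 0 ≤ a) (hq : 0 ≤ q) :
    AntitoneOn (fun t : ℝ => exp (-a * t ^ q)) (Ici 0) := fun s hs t _ hst => by
  have : s ^ q ≤ t ^ q := rpow_le_rpow hs hst hq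
  simp only [exp_le_exp]
  nlinarith

lemma expRpowTail_nonneg : 0 ≤ expRpowTail a q x :=
  setIntegral_nonneg measurableSet_Ioi fun _ _ => (exp_pos _).le

lemma expRpowTail_sub_expRpowTail (ha : 0 < a) (hq : 0 < q) (hx : 0 ≤ x) (hxy : x ≤ y) :
    expRpowTail a q x - expRpowTail a q y = ∫ t in x..y, exp (-a * t ^ q) :=
  intervalIntegral.integral_Ioi_sub_Ioi
    ((integrableOn_exp_neg_mul_rpow_Ioi ha hq).mono_set (Ioi_subset_Ioi hx)) hxy

lemma mul_exp_le_expRpowTail_sub (ha : 0 < a) (hq : 0 < q) (hx : 0 ≤ x) (hxy : x ≤ y) :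
    (y - x) * exp (-a * y ^ q) ≤ expRpowTail a q x - expRpowTail a q y := by
  have hint : IntervalIntegrable (fun t : ℝ => exp (-a * t ^ q)) volume x y :=
    (intervalIntegrable_iff_integrableOn_Ioc_of_le hxy).2
      ((integrableOn_exp_neg_mul_rpow_Ioi ha hq).mono_set
        (Ioc_subset_Ioi_self.trans (Ioi_subset_Ioi hx)))
  rw [expRpowTail_sub_expRpowTail ha hq hx hxy, ← smul_eq_mul,
    ← intervalIntegral.integral_const]
  exact intervalIntegral.integral_mono_on hxy intervalIntegrable_const hint fun t ht =>
    antitoneOn_exp_neg_mul_rpow ha.le hq.le (mem_Ici.2 (hx.trans ht.1))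
      (mem_Ici.2 (hx.trans hxy)) ht.2

lemma expRpowTail_sub_pos (ha : 0 < a) (hq : 0 < q) (hy : 1 < y) :
    0 < expRpowTail a q 1 - expRpowTail a q y :=
  (mul_pos (sub_pos.2 hy) (exp_pos _)).trans_le
    (mul_exp_le_expRpowTail_sub ha hq zero_le_one hy.le)

lemma expRpowTail_one_pos (ha : 0 < a) (hq : 0 < q) : 0 < expRpowTail a q 1 :=
  (expRpowTail_sub_pos ha hq one_lt_two).trans_le (sub_le_self _ expRpowTail_nonneg)

lemma mul_exp_div_le_expRpowTail_ratio (ha : 0 < a) (hq : 0 < q) (hx : 0 ≤ x) (hxy : x ≤ y)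
    (hy : 1 < y) :
    (y - x) * exp (-a * y ^ q) / expRpowTail a q 1 ≤
      (expRpowTail a q x - expRpowTail a q y) / (expRpowTail a q 1 - expRpowTail a q y) :=
  div_le_div₀ ((mul_nonneg (sub_nonneg.2 hxy) (exp_pos _).le).trans
    (mul_exp_le_expRpowTail_sub ha hq hx hxy))
    (mul_exp_le_expRpowTail_sub ha hq hx hxy) (expRpowTail_sub_pos ha hq hy)
    (sub_le_self _ expRpowTail_nonneg)

end ExpRpowTail

lemma mul_rpow_sub_one_le_add_one_rpow_sub_rpow {p x : ℝ} (hp : 0 ≤ p) (hx : 1 ≤ x) :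
    p * min 1 (2 ^ (p - 1)) * x ^ (p - 1) ≤ (x + 1) ^ p - x ^ p := by
  have hx0 : 0 < x := zero_lt_one.trans_le hx
  obtain ⟨ξ, ⟨hxξ, hξx⟩, hslope⟩ := exists_hasDerivAt_eq_slope (fun t : ℝ => t ^ p)
    (fun t => p * t ^ (p - 1)) (lt_add_one x)
    (continuousOn_id.rpow_const fun t ht => Or.inl (hx0.trans_le ht.1).ne')
    (fun t ht => hasDerivAt_rpow_const (Or.inl (hx0.trans ht.1).ne'))
  have hξ0 : 0 < ξ := hx0.trans hxξ
  have hmin : min 1 (2 ^ (p - 1)) * x ^ (p - 1) ≤ ξ ^ (p - 1) := by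
    rcases le_or_gt 1 p with h1p | hp1
    · calc min 1 (2 ^ (p - 1)) * x ^ (p - 1) ≤ 1 * x ^ (p - 1) := by gcongr; exact min_le_left _ _
        _ ≤ ξ ^ (p - 1) := by rw [one_mul]; exact rpow_le_rpow hx0.le hxξ.le (by linarith)
    · have hp1' : p - 1 ≤ 0 := by linarith
      calc min 1 (2 ^ (p - 1)) * x ^ (p - 1) ≤ 2 ^ (p - 1) * x ^ (p - 1) := by
            gcongr; exact min_le_right _ _
        _ = (2 * x) ^ (p - 1) := (mul_rpow zero_le_two hx0.le).symm
        _ ≤ ξ ^ (p - 1) := rpow_le_rpow_of_nonpos hξ0 (by linarith) hp1'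
  calc p * min 1 (2 ^ (p - 1)) * x ^ (p - 1) = p * (min 1 (2 ^ (p - 1)) * x ^ (p - 1)) := by ring
    _ ≤ p * ξ ^ (p - 1) := mul_le_mul_of_nonneg_left hmin hp
    _ = (x + 1) ^ p - x ^ p := by rw [hslope]; ring

lemma mul_rpow_one_div_rpow {c x q : ℝ} (hc : 0 ≤ c) (hx : 0 ≤ x) (hq : q ≠ 0) :
    (c * x ^ (1 / q)) ^ q = c ^ q * x := by
  rw [mul_rpow hc (rpow_nonneg hx _), ← rpow_mul hx, one_div_mul_cancel hq, rpow_one]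

lemma mul_rpow_mul_exp_le_expRpowTail_ratio {a q c : ℝ} (ha : 0 < a) (hq : 0 < q) (hc : 0 < c)
    {j : ℕ} (hj : 1 ≤ j) (hy : 1 < c * ((j + 1 : ℕ) : ℝ) ^ (1 / q)) :
    c * (1 / q) * min 1 (2 ^ (1 / q - 1)) * exp (-(a * c ^ q)) / expRpowTail a q 1 *
        (j : ℝ) ^ (1 / q - 1) * exp (-(a * c ^ q) * j) ≤
      (expRpowTail a q (c * (j : ℝ) ^ (1 / q)) -
          expRpowTail a q (c * ((j + 1 : ℕ) : ℝ) ^ (1 / q))) /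
        (expRpowTail a q 1 - expRpowTail a q (c * ((j + 1 : ℕ) : ℝ) ^ (1 / q))) := by
  set p := 1 / q
  set x := c * (j : ℝ) ^ p
  set y := c * ((j + 1 : ℕ) : ℝ) ^ p
  have hp : 0 < p := by positivity
  have hgap : c * p * min 1 (2 ^ (p - 1)) * (j : ℝ) ^ (p - 1) ≤ y - x := by
    have := mul_rpow_sub_one_le_add_one_rpow_sub_rpow hp.le (Nat.one_le_cast.2 hj)
    simp only [x, y]
    push_cast
    nlinarith
  have hdecay : exp (-a * y ^ q) = exp (-(a * c ^ q)) * exp (-(a * c ^ q) * j) := by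
    rw [mul_rpow_one_div_rpow hc.le (Nat.cast_nonneg _) hq.ne', ← exp_add]
    congr 1
    push_cast
    ring
  calc c * p * min 1 (2 ^ (p - 1)) * exp (-(a * c ^ q)) / expRpowTail a q 1 *
        (j : ℝ) ^ (p - 1) * exp (-(a * c ^ q) * j)
      = c * p * min 1 (2 ^ (p - 1)) * (j : ℝ) ^ (p - 1) * exp (-a * y ^ q) /
          expRpowTail a q 1 := by rw [hdecay]; ring
    _ ≤ (y - x) * exp (-a * y ^ q) / expRpowTail a q 1 := by
        gcongr
        exact (expRpowTail_one_pos ha hq).le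
    _ ≤ _ := mul_exp_div_le_expRpowTail_ratio ha hq (by positivity)
        (sub_nonneg.1 (hgap.trans' (by positivity))) hy

/-- For `γ > -1`, `b, c > 0`, `κ = 2bc^{1+γ}/(1+γ)`, `f_j = c j^{1/(1+γ)}`, there exist
`K₂ > 0` and `J ∈ ℕ` with
`(φ(f_j) - φ(f_{j+1}))/(φ(1) - φ(f_{j+1})) ≥ K₂ j^{-γ/(1+γ)} e^{-κ j}` for all `j ≥ J`. -/
theorem stmt_11 (γ b c : ℝ) (hγ : -1 < γ) (hb : 0 < b) (hc : 0 < c)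
    (κ : ℝ) (hκ : κ = 2 * b * c ^ (1 + γ) / (1 + γ))
    (φ : ℝ → ℝ)
    (hφ : φ = fun x => ∫ t in Ioi x, Real.exp (-(2 * b / (1 + γ)) * t ^ (1 + γ)))
    (f : ℕ → ℝ) (hf : f = fun j : ℕ => c * (j : ℝ) ^ (1 / (1 + γ))) :
    ∃ K₂ > 0, ∃ J : ℕ, ∀ j : ℕ, J ≤ j →
      (φ (f j) - φ (f (j + 1))) / (φ 1 - φ (f (j + 1))) ≥
        K₂ * (j : ℝ) ^ (-(γ / (1 + γ))) * Real.exp (-κ * j) := by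
  set q := 1 + γ
  set a := 2 * b / q
  have hq : 0 < q := by simp only [q]; linarith
  have ha : 0 < a := by positivity
  have hκ' : κ = a * c ^ q := by rw [hκ]; simp only [a]; ring
  have hexp : -(γ / q) = 1 / q - 1 := by field_simp; simp only [q]; ring
  change φ = expRpowTail a q at hφ
  subst hφ hf hκ'
  have hf_tendsto : Tendsto (fun j : ℕ => c * (j : ℝ) ^ (1 / q)) atTop atTop :=
    ((tendsto_rpow_atTop (by positivity)).comp tendsto_natCast_atTop_atTop).const_mul_atTop hc
  obtain ⟨J, hJ⟩ := ((eventually_ge_atTop 1).and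
    ((hf_tendsto.comp (tendsto_add_atTop_nat 1)).eventually_gt_atTop 1)).exists_forall_of_atTop
  refine ⟨c * (1 / q) * min 1 (2 ^ (1 / q - 1)) * exp (-(a * c ^ q)) / expRpowTail a q 1,
    div_pos (by positivity) (expRpowTail_one_pos ha hq), J, fun j hj => ?_⟩
  rw [ge_iff_le, hexp]
  exact mul_rpow_mul_exp_le_expRpowTail_ratio ha hq hc (hJ j hj).1 (hJ j hj).2
end

section
/- Let γ > −1, b > 0, and σ ∈ (0, 1). Then lim_{x→∞} φ(x) / (φ(σx) · σ^{γ} · exp(−(2b/(1+γ))(1 − σ^{1+γ}) x^{1+γ})) = 1; that is, φ(x)/φ(σx) ∼ σ^{γ} exp(−(2b/(1+γ))(1 − σ^{1+γ}) x^{1+γ}) as x → ∞. -/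
/-!
Integrating by parts against `g x = exp (-c x^p) x^(1-p) / (c p)` gives
`∫_x^∞ exp (-c t^p) dt = g x - (p-1)/(c p) ∫_x^∞ t^(-p) exp (-c t^p) dt`, and the last
integral is at most `x^(-p)` times the left-hand side, so the tail integral is asymptotic
to `g`. The ratio `g x / g (σ x)` is exactly `σ^(p-1) exp (-c (1 - σ^p) x^p)`; here
`c = 2b/(1+γ)` and `p = 1+γ`.
-/

open Real Set Filter MeasureTheory Topology Asymptotics

noncomputable def expTail (c p x : ℝ) : ℝ := ∫ t in Ioi x, exp (-c * t ^ p)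

noncomputable def expTailApprox (c p x : ℝ) : ℝ := exp (-c * x ^ p) * x ^ (1 - p) / (c * p)

section

variable {c p x : ℝ}

theorem integrableOn_exp_neg_mul_rpow_Ioi_s13 (hc : 0 < c) (hp : 0 < p) (hx : 0 ≤ x) :
    IntegrableOn (fun t : ℝ => exp (-c * t ^ p)) (Ioi x) := by
  simpa using (integrableOn_rpow_mul_exp_neg_mul_rpow (s := 0) (by norm_num) hp hc).mono_set
    (Ioi_subset_Ioi hx)

theorem integrableOn_rpow_neg_mul_exp_neg_mul_rpow_Ioi (hc : 0 < c) (hp : 0 < p) (hx : 0 < x) :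
    IntegrableOn (fun t : ℝ => t ^ (-p) * exp (-c * t ^ p)) (Ioi x) := by
  refine ((integrableOn_exp_neg_mul_rpow_Ioi_s13 hc hp hx.le).const_mul (x ^ (-p))).mono' ?_ ?_
  · refine ContinuousOn.aestronglyMeasurable ?_ measurableSet_Ioi
    exact fun t ht => ContinuousAt.continuousWithinAt <| by
      have : t ≠ 0 := (hx.trans ht).ne'
      fun_prop (disch := exact Or.inl this)
  · refine (ae_restrict_iff' measurableSet_Ioi).2 (ae_of_all _ fun t ht => ?_)
    have ht0 : 0 < t := hx.trans ht
    rw [norm_of_nonneg (mul_nonneg (rpow_nonneg ht0.le _) (exp_pos _).le)]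
    exact mul_le_mul_of_nonneg_right (rpow_le_rpow_of_nonpos hx ht.le (by linarith))
      (exp_pos _).le

theorem expTail_pos (hc : 0 < c) (hp : 0 < p) (hx : 0 ≤ x) : 0 < expTail c p x := by
  rw [expTail, setIntegral_pos_iff_support_of_nonneg_ae (ae_of_all _ fun t => (exp_pos _).le)
    (integrableOn_exp_neg_mul_rpow_Ioi_s13 hc hp hx)]
  simp [Function.support, (exp_pos _).ne']

theorem hasDerivAt_expTailApprox (hc : c ≠ 0) (hp : p ≠ 0) (hx : 0 < x) :
    HasDerivAt (expTailApprox c p)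
      (-(exp (-c * x ^ p) + (p - 1) / (c * p) * (x ^ (-p) * exp (-c * x ^ p)))) x := by
  have hexp : HasDerivAt (fun t : ℝ => exp (-c * t ^ p))
      (exp (-c * x ^ p) * (-c * (p * x ^ (p - 1)))) x :=
    ((hasDerivAt_rpow_const (Or.inl hx.ne')).const_mul (-c)).exp
  have hpow : HasDerivAt (fun t : ℝ => t ^ (1 - p)) ((1 - p) * x ^ (1 - p - 1)) x :=
    hasDerivAt_rpow_const (Or.inl hx.ne')
  refine ((hexp.mul hpow).div_const (c * p)).congr_deriv ?_
  have hcancel : x ^ (p - 1) * x ^ (1 - p) = 1 := by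
    rw [← rpow_add hx]; norm_num
  rw [show 1 - p - 1 = -p by ring]
  field_simp
  linear_combination -(c * p) * hcancel

theorem tendsto_expTailApprox_atTop (hc : 0 < c) (hp : 0 < p) :
    Tendsto (expTailApprox c p) atTop (𝓝 0) := by
  have h := ((tendsto_rpow_mul_exp_neg_mul_atTop_nhds_zero ((1 - p) / p) c hc).comp
    (tendsto_rpow_atTop hp)).div_const (c * p)
  rw [zero_div] at h
  refine h.congr' ?_
  filter_upwards [eventually_gt_atTop 0] with x hx
  rw [Function.comp_apply, ← rpow_mul hx.le, mul_div_cancel₀ _ hp.ne', expTailApprox, mul_comm]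

theorem expTailApprox_eq_expTail_add (hc : 0 < c) (hp : 0 < p) (hx : 0 < x) :
    expTailApprox c p x =
      expTail c p x + (p - 1) / (c * p) * ∫ t in Ioi x, t ^ (-p) * exp (-c * t ^ p) := by
  have hf := integrableOn_exp_neg_mul_rpow_Ioi_s13 hc hp hx.le
  have hg :=
    (integrableOn_rpow_neg_mul_exp_neg_mul_rpow_Ioi hc hp hx).const_mul ((p - 1) / (c * p))
  have h := integral_Ioi_of_hasDerivAt_of_tendsto'
    (fun t ht => hasDerivAt_expTailApprox hc.ne' hp.ne' (hx.trans_le ht)) (hf.add hg).neg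
    (tendsto_expTailApprox_atTop hc hp)
  rw [integral_neg, integral_add hf hg, integral_const_mul] at h
  rw [expTail]
  linarith

theorem expTail_isEquivalent_expTailApprox (hc : 0 < c) (hp : 0 < p) :
    expTail c p ~[atTop] expTailApprox c p := by
  set I : ℝ → ℝ := fun x => ∫ t in Ioi x, t ^ (-p) * exp (-c * t ^ p)
  have hI : ∀ x > 0, 0 ≤ I x ∧ I x ≤ x ^ (-p) * expTail c p x := fun x hx => by
    refine ⟨setIntegral_nonneg measurableSet_Ioi fun t ht =>
      mul_nonneg (rpow_nonneg (hx.trans ht).le _) (exp_pos _).le, ?_⟩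
    rw [expTail, ← integral_const_mul]
    exact setIntegral_mono_on (integrableOn_rpow_neg_mul_exp_neg_mul_rpow_Ioi hc hp hx)
      ((integrableOn_exp_neg_mul_rpow_Ioi_s13 hc hp hx.le).const_mul _) measurableSet_Ioi
      fun t ht => mul_le_mul_of_nonneg_right (rpow_le_rpow_of_nonpos hx ht.le (by linarith))
        (exp_pos _).le
  have hratio : Tendsto (fun x => I x / expTail c p x) atTop (𝓝 0) := by
    refine tendsto_of_tendsto_of_tendsto_of_le_of_le' tendsto_const_nhds
      (tendsto_rpow_neg_atTop hp) ?_ ?_ <;>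
      filter_upwards [eventually_gt_atTop 0] with x hx
    · exact div_nonneg (hI x hx).1 (expTail_pos hc hp hx.le).le
    · exact div_le_of_le_mul₀ (expTail_pos hc hp hx.le).le (rpow_nonneg hx.le _) (hI x hx).2
  refine (isEquivalent_of_tendsto_one ?_).symm
  have h := tendsto_const_nhds (x := (1 : ℝ)).add (hratio.const_mul ((p - 1) / (c * p)))
  rw [mul_zero, add_zero] at h
  refine h.congr' ?_
  filter_upwards [eventually_gt_atTop 0] with x hx
  rw [Pi.div_apply, expTailApprox_eq_expTail_add hc hp hx, add_div,
    div_self (expTail_pos hc hp hx.le).ne', mul_div_assoc]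

theorem expTailApprox_eq_mul_expTailApprox_mul {σ : ℝ} (hσ : 0 < σ) (hx : 0 ≤ x) :
    expTailApprox c p x =
      σ ^ (p - 1) * exp (-c * (1 - σ ^ p) * x ^ p) * expTailApprox c p (σ * x) := by
  have hσpow : σ ^ (p - 1) * σ ^ (1 - p) = 1 := by
    rw [← rpow_add hσ]; norm_num
  have hexp :
      exp (-c * (1 - σ ^ p) * x ^ p) * exp (-c * (σ ^ p * x ^ p)) = exp (-c * x ^ p) := by
    rw [← exp_add]; ring_nf
  rw [expTailApprox, expTailApprox, mul_rpow hσ.le hx, mul_rpow hσ.le hx, ← hexp]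
  linear_combination (-exp (-c * (1 - σ ^ p) * x ^ p) * exp (-c * (σ ^ p * x ^ p)) *
    x ^ (1 - p) / (c * p)) * hσpow

end

/-- For `γ > -1`, `b > 0`, `σ ∈ (0,1)`, with `φ(x) = ∫_x^∞ exp(-(2b/(1+γ)) t^{1+γ}) dt`:
`φ(x)/φ(σx) ∼ σ^γ exp(-(2b/(1+γ))(1-σ^{1+γ}) x^{1+γ})` as `x → ∞`. -/
theorem stmt_13 (γ b σ : ℝ) (hγ : -1 < γ) (hb : 0 < b) (hσ : σ ∈ Set.Ioo (0 : ℝ) 1)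
    (φ : ℝ → ℝ)
    (hφ : φ = fun x => ∫ t in Ioi x, Real.exp (-(2 * b / (1 + γ)) * t ^ (1 + γ))) :
    Tendsto (fun x : ℝ =>
        φ x / (φ (σ * x) * σ ^ γ *
          Real.exp (-(2 * b / (1 + γ)) * (1 - σ ^ (1 + γ)) * x ^ (1 + γ))))
      atTop (nhds 1) := by
  have hp : 0 < 1 + γ := by linarith
  have hc : 0 < 2 * b / (1 + γ) := by positivity
  have hσ0 : 0 < σ := hσ.1
  obtain rfl : φ = expTail (2 * b / (1 + γ)) (1 + γ) := hφ
  set c := 2 * b / (1 + γ)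
  set p := 1 + γ
  have hγp : γ = p - 1 := by ring
  have hequiv := expTail_isEquivalent_expTailApprox hc hp
  have hden : (fun x => expTail c p (σ * x) * σ ^ γ * exp (-c * (1 - σ ^ p) * x ^ p))
      ~[atTop] expTailApprox c p := by
    have h := (hequiv.comp_tendsto (tendsto_id.const_mul_atTop hσ0)).mul
      (IsEquivalent.refl (u := fun x => σ ^ γ * exp (-c * (1 - σ ^ p) * x ^ p)))
    refine (h.congr_left (.of_forall fun x => ?_)).congr_right ?_
    · simp only [Pi.mul_apply, Function.comp_apply, id, mul_assoc]
    · filter_upwards [eventually_ge_atTop 0] with x hx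
      rw [expTailApprox_eq_mul_expTailApprox_mul hσ0 hx, hγp]
      simp only [Pi.mul_apply, Function.comp_apply, id]
      ring
  refine (isEquivalent_iff_tendsto_one ?_).1 (hequiv.trans hden.symm)
  filter_upwards [eventually_ge_atTop 0] with x hx
  exact (mul_pos (mul_pos (expTail_pos hc hp (mul_nonneg hσ0.le hx)) (rpow_pos_of_pos hσ0 _))
    (exp_pos _)).ne'
end
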